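/- arXiv:2012.04962 — 2 statements merged into one kernel-verified Lean document; each statement's English description precedes it below -/
import Mathlib

section
/- Let (Ω, F, (F_n), P) be a filtered probability space and (ξ_n(x))_{x∈E}, E ⊂ ℝ^d compact, random fields whose realizations a.s. admit a modulus θ, with M_n := sup_x |ξ_n(x)| + sup_{x≠y} |ξ_n(x)−ξ_n(y)|/θ(|x−y|). If (ξ_n(x), F_n) is a martingale for every fixed x and sup_n E[M_n] < ∞, then there exists a random field (ξ(x))_{x∈E} whose realizations a.s. admit θ, and ξ_n(x) → ξ(x) as n → ∞ pointwise in x, almost surely (on a single full-measure event). -/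
open MeasureTheory Filter Topology

/-!
Fix a countable dense set `S ⊆ E`. Since the realizations are continuous, the θ-seminorm
of `ξ_n` is `C_n = sup_{s,t ∈ S} |ξ_n(s) - ξ_n(t)| / θ(|s - t|)`, a countable supremum of
the submartingales `|ξ_n(s) - ξ_n(t)| / θ(|s - t|)`, hence a submartingale, and
`E C_n ≤ E M_n` is bounded. By the martingale convergence theorem, almost surely `C_n`
converges (so is bounded by some `K`) and every `ξ_n(s)`, `s ∈ S`, converges. The fields
`ξ_n(·, ω)` then share the modulus `K θ`, so convergence on `S` propagates to all of `E`,
and the limit inherits the modulus.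
-/

/-- With Lean's division this is `0` wherever `θ (dist x y) = 0`. -/
noncomputable def thetaQuotient {X : Type*} [PseudoMetricSpace X] (θ : ℝ → ℝ) (u : X → ℝ)
    (x y : X) : ℝ :=
  |u x - u y| / θ (dist x y)

def AdmitsModulus {X : Type*} [PseudoMetricSpace X] (θ : ℝ → ℝ) (u : X → ℝ) : Prop :=
  ∃ C, ∀ x y, |u x - u y| ≤ C * θ (dist x y)

/-- The paper's `M_n(ω)` is `thetaNorm θ (ξ n · ω)`. -/
noncomputable def thetaNorm {X : Type*} [PseudoMetricSpace X] (θ : ℝ → ℝ) (u : X → ℝ) :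
    ℝ :=
  (⨆ x, |u x|) + ⨆ p : {p : X × X // p.1 ≠ p.2}, thetaQuotient θ u p.1.1 p.1.2

theorem cauchySeq_of_dense_of_dist_le {ι X α : Type*} [SemilatticeSup ι] [Nonempty ι]
    [PseudoMetricSpace X] [PseudoMetricSpace α] {u : ι → X → α} {w : ℝ → ℝ} {S : Set X}
    (hw : Tendsto w (𝓝 0) (𝓝 0)) (hu : ∀ i x y, dist (u i x) (u i y) ≤ w (dist x y))
    (hS : Dense S) (hcauchy : ∀ s ∈ S, CauchySeq (u · s)) (x : X) : CauchySeq (u · x) := by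
  refine Metric.cauchySeq_iff.2 fun ε hε => ?_
  obtain ⟨δ, hδ, hwδ⟩ := Metric.tendsto_nhds_nhds.1 hw (ε / 3) (by positivity)
  obtain ⟨s, hxs, hs⟩ := Metric.dense_iff.1 hS x δ hδ
  obtain ⟨N, hN⟩ := Metric.cauchySeq_iff.1 (hcauchy s hs) (ε / 3) (by positivity)
  have hws : w (dist x s) < ε / 3 := by
    have hwxs := hwδ (x := dist x s) (by simpa [dist_comm] using Metric.mem_ball.1 hxs)
    exact (le_abs_self _).trans_lt (by simpa using hwxs)
  refine ⟨N, fun m hm n hn => ?_⟩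
  calc dist (u m x) (u n x)
      ≤ dist (u m x) (u m s) + dist (u m s) (u n s) + dist (u n s) (u n x) :=
        dist_triangle4 _ _ _ _
    _ < ε / 3 + ε / 3 + ε / 3 := by
        gcongr
        · exact (hu m x s).trans_lt hws
        · exact hN m hm n hn
        · exact (hu n s x).trans_lt (dist_comm x s ▸ hws)
    _ = ε := by ring

section Modulus

variable {X : Type*} [PseudoMetricSpace X] {θ : ℝ → ℝ} {u : X → ℝ} {C K : ℝ}

theorem continuous_of_abs_sub_le_mul (hθ₀ : Tendsto θ (𝓝 0) (𝓝 0))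
    (hu : ∀ x y, |u x - u y| ≤ C * θ (dist x y)) : Continuous u := by
  refine continuous_iff_continuousAt.2 fun x => tendsto_iff_dist_tendsto_zero.2 ?_
  have hdist : Tendsto (fun y => dist y x) (𝓝 x) (𝓝 0) :=
    (continuous_id.dist continuous_const).tendsto' x 0 (dist_self x)
  have hbound : Tendsto (fun y => C * θ (dist y x)) (𝓝 x) (𝓝 0) := by
    simpa using (hθ₀.comp hdist).const_mul C
  exact squeeze_zero (fun _ => dist_nonneg) (fun y => hu y x) hbound

theorem abs_sub_le_mul_of_dense {S : Set X} (hu : Continuous u) (hθc : Continuous θ)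
    (hS : Dense S) (hK : ∀ x ∈ S, ∀ y ∈ S, |u x - u y| ≤ K * θ (dist x y)) (x y : X) :
    |u x - u y| ≤ K * θ (dist x y) := by
  have hclosed : IsClosed {p : X × X | |u p.1 - u p.2| ≤ K * θ (dist p.1 p.2)} :=
    isClosed_le (by fun_prop) (by fun_prop)
  exact hclosed.closure_subset_iff.2 (fun p hp => hK _ hp.1 _ hp.2) ((hS.prod hS) (x, y))

theorem thetaQuotient_nonneg {x y : X} (hθ : 0 ≤ θ (dist x y)) :
    0 ≤ thetaQuotient θ u x y :=
  div_nonneg (abs_nonneg _) hθ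

theorem thetaQuotient_le_of_abs_sub_le {x y : X} (hθ : 0 ≤ θ (dist x y))
    (hu : |u x - u y| ≤ C * θ (dist x y)) : thetaQuotient θ u x y ≤ max C 0 := by
  rcases hθ.eq_or_lt with h0 | hpos
  · simp [thetaQuotient, ← h0]
  · exact (div_le_iff₀ hpos).2
      (hu.trans (mul_le_mul_of_nonneg_right (le_max_left _ _) hpos.le))

theorem abs_sub_le_mul_of_thetaQuotient_le {x y : X} (hθ : 0 ≤ θ (dist x y))
    (hu : |u x - u y| ≤ C * θ (dist x y)) (hK : thetaQuotient θ u x y ≤ K) :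
    |u x - u y| ≤ K * θ (dist x y) := by
  rcases hθ.eq_or_lt with h0 | hpos
  · simpa [← h0] using hu
  · exact (div_le_iff₀ hpos).1 hK

theorem thetaNorm_nonneg (hθ : ∀ t, 0 ≤ t → 0 ≤ θ t) : 0 ≤ thetaNorm θ u :=
  add_nonneg (Real.iSup_nonneg fun _ => abs_nonneg _)
    (Real.iSup_nonneg fun _ => thetaQuotient_nonneg (hθ _ dist_nonneg))

theorem AdmitsModulus.bddAbove_range_thetaQuotient (hu : AdmitsModulus θ u)
    (hθ : ∀ t, 0 ≤ t → 0 ≤ θ t) {κ : Type*} (p : κ → X × X) :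
    BddAbove (Set.range fun k => thetaQuotient θ u (p k).1 (p k).2) := by
  obtain ⟨C, hC⟩ := hu
  refine ⟨max C 0, ?_⟩
  rintro _ ⟨k, rfl⟩
  exact thetaQuotient_le_of_abs_sub_le (hθ _ dist_nonneg) (hC _ _)

theorem AdmitsModulus.thetaQuotient_le_thetaNorm (hu : AdmitsModulus θ u)
    (hθ : ∀ t, 0 ≤ t → 0 ≤ θ t) (x y : X) : thetaQuotient θ u x y ≤ thetaNorm θ u := by
  by_cases hxy : x = y
  · simpa [thetaQuotient, hxy] using thetaNorm_nonneg (u := u) hθ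
  · have hsup : 0 ≤ ⨆ x, |u x| := Real.iSup_nonneg fun _ => abs_nonneg _
    exact le_add_of_nonneg_of_le hsup
      (le_ciSup (hu.bddAbove_range_thetaQuotient hθ Subtype.val) ⟨(x, y), hxy⟩)

theorem AdmitsModulus.abs_iSup_thetaQuotient_le_thetaNorm (hu : AdmitsModulus θ u)
    (hθ : ∀ t, 0 ≤ t → 0 ≤ θ t) {κ : Type*} (p : κ → X × X) :
    |⨆ k, thetaQuotient θ u (p k).1 (p k).2| ≤ thetaNorm θ u := by
  rw [abs_of_nonneg (Real.iSup_nonneg fun _ => thetaQuotient_nonneg (hθ _ dist_nonneg))]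
  exact Real.iSup_le (fun k => hu.thetaQuotient_le_thetaNorm hθ _ _) (thetaNorm_nonneg hθ)

theorem AdmitsModulus.abs_le_thetaNorm [CompactSpace X] (hu : AdmitsModulus θ u)
    (hθ₀ : Tendsto θ (𝓝 0) (𝓝 0)) (hθ : ∀ t, 0 ≤ t → 0 ≤ θ t) (x : X) :
    |u x| ≤ thetaNorm θ u := by
  obtain ⟨C, hC⟩ := hu
  have hbdd : BddAbove (Set.range fun x => |u x|) :=
    (isCompact_range (continuous_of_abs_sub_le_mul hθ₀ hC).abs).bddAbove
  exact le_add_of_le_of_nonneg (le_ciSup hbdd x)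
    (Real.iSup_nonneg fun _ => thetaQuotient_nonneg (hθ _ dist_nonneg))

theorem AdmitsModulus.abs_sub_le_iSup_thetaQuotient_mul {S : Set X} (hu : AdmitsModulus θ u)
    (hθc : Continuous θ) (hθ₀ : Tendsto θ (𝓝 0) (𝓝 0)) (hθ : ∀ t, 0 ≤ t → 0 ≤ θ t)
    (hS : Dense S) (x y : X) :
    |u x - u y| ≤ (⨆ p : S × S, thetaQuotient θ u p.1 p.2) * θ (dist x y) := by
  have hbdd := hu.bddAbove_range_thetaQuotient hθ fun p : S × S => ((p.1 : X), (p.2 : X))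
  obtain ⟨C, hC⟩ := hu
  refine abs_sub_le_mul_of_dense (continuous_of_abs_sub_le_mul hθ₀ hC) hθc hS
    (fun x hx y hy => ?_) x y
  exact abs_sub_le_mul_of_thetaQuotient_le (hθ _ dist_nonneg) (hC x y)
    (le_ciSup hbdd (⟨x, hx⟩, ⟨y, hy⟩))

theorem tendsto_limUnder_of_abs_sub_le_mul {S : Set X} {u : ℕ → X → ℝ}
    (hθ₀ : Tendsto θ (𝓝 0) (𝓝 0)) (hS : Dense S)
    (hu : ∀ n x y, |u n x - u n y| ≤ K * θ (dist x y))
    (hconv : ∀ s ∈ S, ∃ c, Tendsto (u · s) atTop (𝓝 c)) :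
    (∀ x, Tendsto (u · x) atTop (𝓝 (limUnder atTop (u · x)))) ∧
      AdmitsModulus θ fun x => limUnder atTop (u · x) := by
  have hw : Tendsto (fun t => K * θ t) (𝓝 0) (𝓝 0) := by simpa using hθ₀.const_mul K
  have hlim : ∀ x, Tendsto (u · x) atTop (𝓝 (limUnder atTop (u · x))) := fun x =>
    tendsto_nhds_limUnder <| cauchySeq_tendsto_of_complete <|
      cauchySeq_of_dense_of_dist_le hw hu hS
        (fun s hs => (hconv s hs).choose_spec.cauchySeq) x
  exact ⟨hlim, K, fun x y => le_of_tendsto' ((hlim x).sub (hlim y)).abs fun n => hu n x y⟩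

theorem tendsto_limUnder_of_bddAbove_iSup_thetaQuotient {S : Set X} {u : ℕ → X → ℝ}
    (hθc : Continuous θ) (hθ₀ : Tendsto θ (𝓝 0) (𝓝 0)) (hθ : ∀ t, 0 ≤ t → 0 ≤ θ t)
    (hS : Dense S) (hu : ∀ n, AdmitsModulus θ (u n))
    (hbdd : BddAbove (Set.range fun n => ⨆ p : S × S, thetaQuotient θ (u n) p.1 p.2))
    (hconv : ∀ s ∈ S, ∃ c, Tendsto (u · s) atTop (𝓝 c)) :
    (∀ x, Tendsto (u · x) atTop (𝓝 (limUnder atTop (u · x)))) ∧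
      AdmitsModulus θ fun x => limUnder atTop (u · x) := by
  obtain ⟨K, hK⟩ := hbdd
  refine tendsto_limUnder_of_abs_sub_le_mul (K := K) hθ₀ hS (fun n x y => ?_) hconv
  exact ((hu n).abs_sub_le_iSup_thetaQuotient_mul hθc hθ₀ hθ hS x y).trans
    (mul_le_mul_of_nonneg_right (hK ⟨n, rfl⟩) (hθ _ dist_nonneg))

end Modulus

section Martingale

variable {Ω : Type*} {mΩ : MeasurableSpace Ω} {μ : Measure Ω}

theorem MeasureTheory.Martingale.submartingale_abs {ι : Type*} [Preorder ι]
    {ℱ : Filtration ι mΩ} {f : ι → Ω → ℝ} (hf : Martingale f ℱ μ) :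
    Submartingale (fun i ω => |f i ω|) ℱ μ :=
  hf.submartingale.sup hf.neg.submartingale

theorem MeasureTheory.Submartingale.div_const {ι : Type*} [Preorder ι]
    {ℱ : Filtration ι mΩ} {f : ι → Ω → ℝ} (hf : Submartingale f ℱ μ) {c : ℝ} (hc : 0 ≤ c) :
    Submartingale (fun i ω => f i ω / c) ℱ μ := by
  have hdiv : (fun i ω => f i ω / c) = c⁻¹ • f := by
    ext i ω
    simp [div_eq_inv_mul]
  exact hdiv ▸ hf.smul_nonneg (inv_nonneg.2 hc)

theorem submartingale_iSup_of_nonneg {ι κ : Type*} [Preorder ι] [Countable κ]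
    {ℱ : Filtration ι mΩ} {X : κ → ι → Ω → ℝ} {g : ι → Ω → ℝ}
    (hX : ∀ k, Submartingale (X k) ℱ μ) (hnn : ∀ k i ω, 0 ≤ X k i ω)
    (hg : ∀ i, Integrable (g i) μ) (hdom : ∀ i, ∀ᵐ ω ∂μ, ∀ k, X k i ω ≤ g i ω) :
    Submartingale (fun i ω => ⨆ k, X k i ω) ℱ μ := by
  have hsup_nonneg : ∀ i ω, 0 ≤ ⨆ k, X k i ω := fun i ω =>
    Real.iSup_nonneg fun k => hnn k i ω
  have hadapted : StronglyAdapted ℱ fun i ω => ⨆ k, X k i ω := fun i =>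
    (Measurable.iSup (mδ := ℱ i) fun k =>
      ((hX k).stronglyAdapted i).measurable).stronglyMeasurable
  have hint : ∀ i, Integrable (fun ω => ⨆ k, X k i ω) μ := fun i => by
    refine (hg i).mono ((hadapted i).mono (ℱ.le i)).aestronglyMeasurable ?_
    filter_upwards [hdom i] with ω hω
    rw [Real.norm_of_nonneg (hsup_nonneg i ω), Real.norm_eq_abs]
    exact Real.iSup_le (fun k => (hω k).trans (le_abs_self _)) (abs_nonneg _)
  refine ⟨hadapted, fun i j hij => ?_, hint⟩
  have hle_sup : ∀ k, X k j ≤ᵐ[μ] fun ω => ⨆ k, X k j ω := fun k => by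
    filter_upwards [hdom j] with ω hω
    exact le_ciSup ⟨g j ω, by rintro _ ⟨k, rfl⟩; exact hω k⟩ k
  have hcond : ∀ᵐ ω ∂μ, ∀ k, X k i ω ≤ μ[fun ω => ⨆ k, X k j ω | ℱ i] ω :=
    ae_all_iff.2 fun k => ((hX k).ae_le_condExp hij).trans
      (condExp_mono ((hX k).integrable j) (hint j) (hle_sup k))
  filter_upwards [hcond, condExp_nonneg (m := ℱ i) (ae_of_all μ (hsup_nonneg j))]
    with ω hω h0
  exact Real.iSup_le hω h0

theorem MeasureTheory.Submartingale.exists_ae_tendsto_of_abs_le [IsFiniteMeasure μ]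
    {ℱ : Filtration ℕ mΩ} {f g : ℕ → Ω → ℝ} {R : ℝ} (hf : Submartingale f ℱ μ)
    (hg : ∀ n, Integrable (g n) μ) (hR : ∀ n, ∫ ω, g n ω ∂μ ≤ R)
    (hfg : ∀ n, ∀ᵐ ω ∂μ, |f n ω| ≤ g n ω) :
    ∀ᵐ ω ∂μ, ∃ c, Tendsto (fun n => f n ω) atTop (𝓝 c) := by
  refine hf.exists_ae_tendsto_of_bdd (R := R.toNNReal) fun n => ?_
  rw [eLpNorm_one_eq_lintegral_enorm,
    ← ofReal_integral_norm_eq_lintegral_enorm (hf.integrable n)]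
  exact ENNReal.ofReal_le_ofReal
    ((integral_mono_ae (hf.integrable n).norm (hg n) (hfg n)).trans (hR n))

theorem submartingale_iSup_thetaQuotient {ι X : Type*} [Preorder ι] [PseudoMetricSpace X]
    {S : Set X} [Countable S] {ℱ : Filtration ι mΩ} {θ : ℝ → ℝ} {ξ : ι → X → Ω → ℝ}
    (hθ : ∀ t, 0 ≤ t → 0 ≤ θ t) (hmart : ∀ x, Martingale (fun i => ξ i x) ℱ μ)
    (hadm : ∀ i, ∀ᵐ ω ∂μ, AdmitsModulus θ (ξ i · ω))
    (hint : ∀ i, Integrable (fun ω => thetaNorm θ (ξ i · ω)) μ) :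
    Submartingale (fun i ω => ⨆ p : S × S, thetaQuotient θ (ξ i · ω) p.1 p.2) ℱ μ :=
  submartingale_iSup_of_nonneg
    (fun p => ((hmart p.1).sub (hmart p.2)).submartingale_abs.div_const (hθ _ dist_nonneg))
    (fun _ _ _ => thetaQuotient_nonneg (hθ _ dist_nonneg)) hint
    fun i => (hadm i).mono fun _ hω _ => hω.thetaQuotient_le_thetaNorm hθ _ _

end Martingale

theorem martingale_field_modulus_limit_general
    {Ω : Type*} {mΩ : MeasurableSpace Ω} {μ : Measure Ω} [IsProbabilityMeasure μ]
    (F : Filtration ℕ mΩ)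
    {d : ℕ} (E : Set (EuclideanSpace ℝ (Fin d))) (hE : IsCompact E)
    (θ : ℝ → ℝ) (hθc : Continuous θ) (hθm : MonotoneOn θ (Set.Ici 0))
    (hθ0 : θ 0 = 0)
    (ξ : ℕ → E → Ω → ℝ)
    -- realizations of ξ n admit the modulus θ almost surely
    (hadm : ∀ n, ∀ᵐ ω ∂μ, ∃ C : ℝ, ∀ x y : E,
      |ξ n x ω - ξ n y ω| ≤ C * θ (dist (x : EuclideanSpace ℝ (Fin d)) y))
    -- M n ω = sup_x |ξ n x ω| + sup_{x ≠ y} |ξ n x ω - ξ n y ω| / θ(|x - y|)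
    (M : ℕ → Ω → ℝ)
    (hM : ∀ n ω, M n ω = (⨆ x : E, |ξ n x ω|) +
      ⨆ p : {p : E × E // p.1 ≠ p.2},
        |ξ n p.val.1 ω - ξ n p.val.2 ω| /
          θ (dist ((p.val.1 : E) : EuclideanSpace ℝ (Fin d)) (p.val.2 : E)))
    -- (ξ n x, F n) is a martingale for every fixed x
    (hmart : ∀ x : E, Martingale (fun n => ξ n x) F μ)
    -- sup_n E[M n] < ∞
    (hint : ∀ n, Integrable (M n) μ)
    (hbdd : ∃ C : ℝ, ∀ n, ∫ ω, M n ω ∂μ ≤ C) :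
    ∃ ξlim : E → Ω → ℝ,
      (∀ᵐ ω ∂μ, ∃ C : ℝ, ∀ x y : E,
        |ξlim x ω - ξlim y ω| ≤ C * θ (dist (x : EuclideanSpace ℝ (Fin d)) y)) ∧
      (∀ᵐ ω ∂μ, ∀ x : E, Tendsto (fun n => ξ n x ω) atTop (𝓝 (ξlim x ω))) := by
  have hθ : ∀ t, 0 ≤ t → 0 ≤ θ t := fun t ht => hθ0 ▸ hθm Set.self_mem_Ici ht ht
  have hθ₀ : Tendsto θ (𝓝 0) (𝓝 0) := by simpa [hθ0] using hθc.tendsto 0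
  have : CompactSpace E := isCompact_iff_compactSpace.mp hE
  obtain ⟨S, hSc, hSd⟩ := TopologicalSpace.exists_countable_dense E
  have : Countable S := hSc.to_subtype
  obtain ⟨R, hR⟩ := hbdd
  obtain rfl : M = fun n ω => thetaNorm θ (ξ n · ω) := funext₂ hM
  have hC := submartingale_iSup_thetaQuotient (S := S) hθ hmart hadm hint
  have hCconv := hC.exists_ae_tendsto_of_abs_le hint hR fun n =>
    (hadm n).mono fun _ hω => AdmitsModulus.abs_iSup_thetaQuotient_le_thetaNorm hω hθ
      fun p : S × S => ((p.1 : E), (p.2 : E))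
  have hSconv : ∀ᵐ ω ∂μ, ∀ s : S, ∃ c, Tendsto (ξ · s ω) atTop (𝓝 c) :=
    ae_all_iff.2 fun s => (hmart s).submartingale.exists_ae_tendsto_of_abs_le hint hR fun n =>
      (hadm n).mono fun _ hω => AdmitsModulus.abs_le_thetaNorm hω hθ₀ hθ s
  have hlim : ∀ᵐ ω ∂μ, (∀ x, Tendsto (ξ · x ω) atTop (𝓝 (limUnder atTop (ξ · x ω)))) ∧
      AdmitsModulus θ fun x => limUnder atTop (ξ · x ω) := by
    filter_upwards [hCconv, hSconv, ae_all_iff.2 hadm] with ω ⟨c, hc⟩ hs hadmω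
    exact tendsto_limUnder_of_bddAbove_iSup_thetaQuotient hθc hθ₀ hθ hSd hadmω
      hc.bddAbove_range fun s hs' => hs ⟨s, hs'⟩
  exact ⟨fun x ω => limUnder atTop (ξ · x ω), hlim.mono fun _ h => h.2,
    hlim.mono fun _ h => h.1⟩

theorem martingale_field_modulus_limit
    {Ω : Type*} {mΩ : MeasurableSpace Ω} {μ : Measure Ω} [IsProbabilityMeasure μ]
    (F : Filtration ℕ mΩ)
    {d : ℕ} (E : Set (EuclideanSpace ℝ (Fin d))) (hE : IsCompact E) (hEne : E.Nonempty)
    (θ : ℝ → ℝ) (hθc : Continuous θ) (hθm : MonotoneOn θ (Set.Ici 0))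
    (hθ0 : θ 0 = 0)
    (hθsub : ∀ x y : ℝ, 0 ≤ x → 0 ≤ y → θ (x + y) ≤ θ x + θ y)
    (ξ : ℕ → E → Ω → ℝ)
    -- realizations of ξ n admit the modulus θ almost surely
    (hadm : ∀ n, ∀ᵐ ω ∂μ, ∃ C : ℝ, ∀ x y : E,
      |ξ n x ω - ξ n y ω| ≤ C * θ (dist (x : EuclideanSpace ℝ (Fin d)) y))
    -- M n ω = sup_x |ξ n x ω| + sup_{x ≠ y} |ξ n x ω - ξ n y ω| / θ(|x - y|)
    (M : ℕ → Ω → ℝ)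
    (hM : ∀ n ω, M n ω = (⨆ x : E, |ξ n x ω|) +
      ⨆ p : {p : E × E // p.1 ≠ p.2},
        |ξ n p.val.1 ω - ξ n p.val.2 ω| /
          θ (dist ((p.val.1 : E) : EuclideanSpace ℝ (Fin d)) (p.val.2 : E)))
    -- (ξ n x, F n) is a martingale for every fixed x
    (hmart : ∀ x : E, Martingale (fun n => ξ n x) F μ)
    -- sup_n E[M n] < ∞
    (hint : ∀ n, Integrable (M n) μ)
    (hbdd : ∃ C : ℝ, ∀ n, ∫ ω, M n ω ∂μ ≤ C) :
    ∃ ξlim : E → Ω → ℝ,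
      (∀ᵐ ω ∂μ, ∃ C : ℝ, ∀ x y : E,
        |ξlim x ω - ξlim y ω| ≤ C * θ (dist (x : EuclideanSpace ℝ (Fin d)) y)) ∧
      (∀ᵐ ω ∂μ, ∀ x : E, Tendsto (fun n => ξ n x ω) atTop (𝓝 (ξlim x ω))) :=
  martingale_field_modulus_limit_general F E hE θ hθc hθm hθ0 ξ hadm M hM hmart hint hbdd
end

section
/- Let E = [a,b] and let f_n : E → ℝ be C¹ functions such that f_n(a) → c ∈ ℝ and f_n' converges pointwise to a continuous function g on E, with sup_x |f_n'(x)| ≤ K_n where K_n converges. Then f_n converges uniformly on E to the function f(x) = c + ∫_a^x g(s) ds, and f is C¹ with f' = g. -/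
open Filter Topology MeasureTheory intervalIntegral

theorem uniform_limit_of_C1 (a b : ℝ) (hab : a ≤ b)
    (f f' : ℕ → ℝ → ℝ)
    (hderiv : ∀ n, ∀ x ∈ Set.Icc a b,
      HasDerivWithinAt (f n) (f' n x) (Set.Icc a b) x)
    (hcont : ∀ n, ContinuousOn (f' n) (Set.Icc a b))
    (c : ℝ) (hc : Tendsto (fun n => f n a) atTop (𝓝 c))
    (g : ℝ → ℝ) (hg : ContinuousOn g (Set.Icc a b))
    (hptw : ∀ x ∈ Set.Icc a b, Tendsto (fun n => f' n x) atTop (𝓝 (g x)))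
    (K : ℕ → ℝ) (hK : ∀ n, ∀ x ∈ Set.Icc a b, |f' n x| ≤ K n)
    (Klim : ℝ) (hKlim : Tendsto K atTop (𝓝 Klim)) :
    TendstoUniformlyOn (fun n x => f n x) (fun x => c + ∫ s in a..x, g s)
        atTop (Set.Icc a b) ∧
      ∀ x ∈ Set.Icc a b,
        HasDerivWithinAt (fun y => c + ∫ s in a..y, g s) (g x) (Set.Icc a b) x := by
  have hsub : ∀ x ∈ Set.Icc a b, Set.uIcc a x ⊆ Set.Icc a b := by
    intro x hx
    rw [Set.uIcc_of_le hx.1]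
    exact Set.Icc_subset_Icc le_rfl hx.2
  have hgint : ∀ x ∈ Set.Icc a b, IntervalIntegrable g volume a x := fun x hx =>
    (hg.mono (hsub x hx)).intervalIntegrable
  have hfint : ∀ n, ∀ x ∈ Set.Icc a b, IntervalIntegrable (f' n) volume a x := fun n x hx =>
    ((hcont n).mono (hsub x hx)).intervalIntegrable
  -- second part: FTC
  have hFd : ∀ x ∈ Set.Icc a b,
      HasDerivWithinAt (fun y => c + ∫ s in a..y, g s) (g x) (Set.Icc a b) x := by
    intro x hx
    haveI : Fact (x ∈ Set.Icc a b) := ⟨hx⟩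
    have h : HasDerivWithinAt (fun u => ∫ s in a..u, g s) (g x) (Set.Icc a b) x :=
      intervalIntegral.integral_hasDerivWithinAt_right (hgint x hx)
        (hg.stronglyMeasurableAtFilter_nhdsWithin measurableSet_Icc x) (hg x hx)
    exact h.const_add c
  refine ⟨?_, hFd⟩
  -- FTC for each f n
  have hfn : ∀ n, ∀ x ∈ Set.Icc a b, f n x = f n a + ∫ s in a..x, f' n s := by
    intro n x hx
    have heq : ∫ s in a..x, f' n s = f n x - f n a := by
      apply intervalIntegral.integral_eq_sub_of_hasDeriv_right_of_le hx.1
      · exact fun y hy => ((hderiv n y (Set.Icc_subset_Icc le_rfl hx.2 hy)).continuousWithinAt).mono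
          (Set.Icc_subset_Icc le_rfl hx.2)
      · intro y hy
        have hy' : y ∈ Set.Ioo a b := ⟨hy.1, lt_of_lt_of_le hy.2 hx.2⟩
        have : HasDerivAt (f n) (f' n y) y :=
          (hderiv n y (Set.Ioo_subset_Icc_self hy')).hasDerivAt
            (Icc_mem_nhds hy'.1 hy'.2)
        exact this.hasDerivWithinAt
      · exact hfint n x hx
    linarith
  -- dominated convergence for ∫_{Icc a b} |f' n - g|
  obtain ⟨M, hM⟩ : ∃ M, ∀ n, K n ≤ M := by
    obtain ⟨M, hM⟩ := hKlim.bddAbove_range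
    exact ⟨M, fun n => hM ⟨n, rfl⟩⟩
  have habs_cont : ∀ n, ContinuousOn (fun s => |f' n s - g s|) (Set.Icc a b) :=
    fun n => ((hcont n).sub hg).abs
  have hIlim : Tendsto (fun n => ∫ s in Set.Icc a b, |f' n s - g s|) atTop (𝓝 0) := by
    have h0 : (0 : ℝ) = ∫ s in Set.Icc a b, (0 : ℝ) := by simp
    rw [h0]
    apply MeasureTheory.tendsto_integral_of_dominated_convergence
      (fun s => M + |g s|)
    · exact fun n => ((habs_cont n).aestronglyMeasurable measurableSet_Icc)
    · exact ((continuousOn_const.add hg.abs).integrableOn_Icc)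
    · intro n
      rw [MeasureTheory.ae_restrict_iff' measurableSet_Icc]
      filter_upwards with s hs
      have h1 : |f' n s - g s| ≤ |f' n s| + |g s| := abs_sub _ _
      have h2 : |f' n s| ≤ K n := hK n s hs
      have : ‖|f' n s - g s|‖ = |f' n s - g s| := by
        rw [Real.norm_eq_abs, abs_abs]
      rw [this]
      linarith [hM n]
    · rw [MeasureTheory.ae_restrict_iff' measurableSet_Icc]
      filter_upwards with s hs
      have : Tendsto (fun n => |f' n s - g s|) atTop (𝓝 |g s - g s|) :=
        ((hptw s hs).sub tendsto_const_nhds).abs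
      simpa using this
  -- key bound
  have key : ∀ n, ∀ x ∈ Set.Icc a b,
      |∫ s in a..x, (f' n s - g s)| ≤ ∫ s in Set.Icc a b, |f' n s - g s| := by
    intro n x hx
    calc |∫ s in a..x, (f' n s - g s)| ≤ ∫ s in a..x, |f' n s - g s| :=
          intervalIntegral.abs_integral_le_integral_abs hx.1
      _ = ∫ s in Set.Ioc a x, |f' n s - g s| := intervalIntegral.integral_of_le hx.1
      _ ≤ ∫ s in Set.Icc a b, |f' n s - g s| := by
          apply MeasureTheory.setIntegral_mono_set ((habs_cont n).integrableOn_Icc)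
          · exact Filter.Eventually.of_forall (fun s => abs_nonneg _)
          · exact ((Set.Ioc_subset_Icc_self).trans
              (Set.Icc_subset_Icc le_rfl hx.2)).eventuallyLE
  -- conclude uniform convergence
  have hB : Tendsto (fun n => |f n a - c| + ∫ s in Set.Icc a b, |f' n s - g s|)
      atTop (𝓝 0) := by
    have h1 : Tendsto (fun n => |f n a - c|) atTop (𝓝 0) := by
      have h2 : Tendsto (fun n => f n a - c) atTop (𝓝 (c - c)) :=
        hc.sub tendsto_const_nhds
      rw [sub_self] at h2
      simpa using h2.abs
    simpa using h1.add hIlim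
  rw [Metric.tendstoUniformlyOn_iff]
  intro ε hε
  filter_upwards [(hB.eventually (eventually_lt_nhds hε))] with n hn x hx
  have hdist : dist ((fun x => c + ∫ s in a..x, g s) x) (f n x)
      ≤ |f n a - c| + ∫ s in Set.Icc a b, |f' n s - g s| := by
    rw [Real.dist_eq]
    have heq : (c + ∫ s in a..x, g s) - f n x
        = (c - f n a) - ∫ s in a..x, (f' n s - g s) := by
      rw [hfn n x hx, intervalIntegral.integral_sub (hfint n x hx) (hgint x hx)]
      ring
    rw [heq]
    calc |(c - f n a) - ∫ s in a..x, (f' n s - g s)|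
        ≤ |c - f n a| + |∫ s in a..x, (f' n s - g s)| := abs_sub _ _
      _ ≤ |f n a - c| + ∫ s in Set.Icc a b, |f' n s - g s| := by
          rw [abs_sub_comm]
          exact add_le_add le_rfl (key n x hx)
  exact lt_of_le_of_lt hdist hn
end
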